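/- arXiv:0803.4117 — 3 statements merged into one kernel-verified Lean document; each statement's English description precedes it below -/
import Mathlib

section
/- Let G be a topological group and U an open neighborhood of the identity e. Then there exists a decreasing sequence (U_n) of open neighborhoods of e such that for every n and every bijection σ of {0,…,n}, the product U_{σ(0)} · U_{σ(1)} · ⋯ · U_{σ(n)} is contained in U. -/
open scoped Pointwise
open Topology TopologicalSpace

/-!
Choose open neighbourhoods `U = W₀ ⊇ W₁ ⊇ ⋯` of `1` with `Wₖ₊₁ Wₖ₊₁ Wₖ₊₁ ⊆ Wₖ` and take
`Vₙ = Wₙ₊₁`. A product of factors from `W`'s with pairwise distinct indices, all larger than `m`,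
lies in `Wₘ`: if `k + 1` is the smallest index occurring, the factor carrying it splits the
product as `a x b` where, by induction on the length, `a` and `b` lie in `Wₖ₊₁`, so that
`a x b ∈ Wₖ ⊆ Wₘ`.
-/

theorem exists_open_nhds_one_mul_mul_subset {M : Type*} [TopologicalSpace M] [MulOneClass M]
    [ContinuousMul M] {S : Set M} (hS : S ∈ 𝓝 (1 : M)) :
    ∃ T : Set M, IsOpen T ∧ (1 : M) ∈ T ∧ T * T * T ⊆ S := by
  obtain ⟨V, hVo, hV1, hVS⟩ := exists_open_nhds_one_mul_subset hS
  obtain ⟨T, hTo, hT1, hTV⟩ := exists_open_nhds_one_mul_subset (hVo.mem_nhds hV1)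
  have hT : T ⊆ V := (Set.subset_mul_left T hT1).trans hTV
  exact ⟨T, hTo, hT1, (Set.mul_subset_mul hTV hT).trans hVS⟩

theorem exists_seq_openNhdsOf_one_mul_mul_subset {M : Type*} [TopologicalSpace M]
    [MulOneClass M] [ContinuousMul M] (U : OpenNhdsOf (1 : M)) :
    ∃ W : ℕ → OpenNhdsOf (1 : M),
      W 0 = U ∧ ∀ n, (W (n + 1) : Set M) * W (n + 1) * W (n + 1) ⊆ W n := by
  have hstep (S : OpenNhdsOf (1 : M)) : ∃ T : OpenNhdsOf (1 : M), (T : Set M) * T * T ⊆ S := by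
    obtain ⟨T, hTo, hT1, hT⟩ := exists_open_nhds_one_mul_mul_subset (S.isOpen.mem_nhds S.mem)
    exact ⟨⟨⟨T, hTo⟩, hT1⟩, hT⟩
  choose f hf using hstep
  exact ⟨fun n => f^[n] U, rfl, fun n => by simpa only [Function.iterate_succ_apply'] using hf _⟩

section MulMulSubset

variable {M : Type*} [Monoid M] {W : ℕ → Set M}

theorem antitone_of_one_mem_of_mul_mul_subset (hW1 : ∀ n, (1 : M) ∈ W n)
    (hW : ∀ n, W (n + 1) * W (n + 1) * W (n + 1) ⊆ W n) : Antitone W :=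
  antitone_nat_of_succ_le fun n x hx => by
    simpa using hW n (Set.mul_mem_mul (Set.mul_mem_mul hx (hW1 _)) (hW1 _))

theorem list_prod_mem_of_nodup_indices (hW1 : ∀ n, (1 : M) ∈ W n)
    (hW : ∀ n, W (n + 1) * W (n + 1) * W (n + 1) ⊆ W n) (l : List (ℕ × M)) (m : ℕ)
    (hnd : (l.map Prod.fst).Nodup) (hl : ∀ p ∈ l, m < p.1 ∧ p.2 ∈ W p.1) :
    (l.map Prod.snd).prod ∈ W m := by
  obtain rfl | hne := eq_or_ne l []
  · simpa using hW1 m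
  obtain ⟨p, hpl, hpmin⟩ := Multiset.exists_min_image Prod.fst (mt (Multiset.coe_eq_zero l).mp hne)
  rw [Multiset.mem_coe] at hpl
  obtain ⟨hmp, hp⟩ := hl p hpl
  obtain ⟨A, B, rfl⟩ := List.append_of_mem hpl
  rw [List.map_append, List.map_cons, List.nodup_middle, ← List.map_append,
    List.nodup_cons] at hnd
  have hAB : ∀ q ∈ A ++ B, p.1 < q.1 ∧ q.2 ∈ W q.1 := fun q hq =>
    have hq' : q ∈ A ++ p :: B := by simp only [List.mem_append, List.mem_cons] at hq ⊢; tauto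
    ⟨(hpmin q hq').lt_of_ne fun h => hnd.1 (h ▸ List.mem_map_of_mem hq), (hl q hq').2⟩
  have hA := list_prod_mem_of_nodup_indices hW1 hW A p.1
    (hnd.2.sublist ((List.sublist_append_left A B).map _)) fun q hq => hAB q (by simp [hq])
  have hB := list_prod_mem_of_nodup_indices hW1 hW B p.1
    (hnd.2.sublist ((List.sublist_append_right A B).map _)) fun q hq => hAB q (by simp [hq])
  obtain ⟨k, hk⟩ : ∃ k, p.1 = k + 1 := Nat.exists_eq_add_one.mpr (by omega)
  rw [hk] at hA hB hp
  have hprod : ((A ++ p :: B).map Prod.snd).prod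
      = (A.map Prod.snd).prod * p.2 * (B.map Prod.snd).prod := by
    simp [List.prod_append, mul_assoc]
  rw [hprod]
  exact antitone_of_one_mem_of_mul_mul_subset hW1 hW (by omega : m ≤ k)
    (hW k (Set.mul_mem_mul (Set.mul_mem_mul hA hp) hB))
termination_by l.length
decreasing_by all_goals subst_vars; simp only [List.length_append, List.length_cons]; omega

theorem list_ofFn_prod_mem_of_injective (hW1 : ∀ n, (1 : M) ∈ W n)
    (hW : ∀ n, W (n + 1) * W (n + 1) * W (n + 1) ⊆ W n) {n m : ℕ} {idx : Fin n → ℕ}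
    (hidx : Function.Injective idx) (hm : ∀ i, m < idx i) {g : Fin n → M}
    (hg : ∀ i, g i ∈ W (idx i)) : (List.ofFn g).prod ∈ W m := by
  have := list_prod_mem_of_nodup_indices hW1 hW (List.ofFn fun i => (idx i, g i)) m
    (by simpa [List.map_ofFn, Function.comp_def, List.nodup_ofFn] using hidx)
    (by simpa [List.mem_ofFn] using fun i => ⟨hm i, hg i⟩)
  simpa [List.map_ofFn, Function.comp_def] using this

end MulMulSubset

/-- In a topological group, inside any open neighborhood `U` of the identity there is a
decreasing sequence of open neighborhoods `V n` of the identity such that for every `n`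
and every permutation `σ` of `{0,…,n}` the product `V (σ 0) ⋯ V (σ n)` is contained in `U`. -/
theorem stmt1 {G : Type*} [Group G] [TopologicalSpace G] [IsTopologicalGroup G]
    (U : Set G) (hU : IsOpen U) (heU : (1 : G) ∈ U) :
    ∃ V : ℕ → Set G, (∀ n, IsOpen (V n) ∧ (1 : G) ∈ V n) ∧ (∀ n, V (n + 1) ⊆ V n) ∧
      ∀ (n : ℕ) (σ : Equiv.Perm (Fin (n + 1))) (g : Fin (n + 1) → G),
        (∀ i, g i ∈ V (σ i)) → (List.ofFn g).prod ∈ U := by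
  obtain ⟨W, hW0, hW⟩ :=
    exists_seq_openNhdsOf_one_mul_mul_subset (⟨⟨U, hU⟩, heU⟩ : OpenNhdsOf (1 : G))
  have hW1 (n : ℕ) : (1 : G) ∈ (W n : Set G) := (W n).mem
  refine ⟨fun n => W (n + 1), fun n => ⟨(W _).isOpen, hW1 _⟩,
    fun n => antitone_of_one_mem_of_mul_mul_subset hW1 hW (Nat.le_succ _), ?_⟩
  intro n σ g hg
  have hidx : Function.Injective fun i => (σ i : ℕ) + 1 := fun i j h =>
    σ.injective (Fin.val_injective (Nat.succ_injective h))
  have := list_ofFn_prod_mem_of_injective hW1 hW hidx (m := 0) (by simp) hg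
  rwa [hW0] at this
end

section
/- Let G be a topological group admitting a functorial embedding j : [0,1] → G, and let ℐ be a usual Cantor scheme with J_∅ = [0,1]. Then for all natural numbers n ≠ m, the sets z_n((0,1]) and z_m((0,1]) are disjoint, where z_n : [0,1] → G is the map sending 0 to the identity and ξ ∈ (0,1] to the alternating product π₋ of the endpoints of the family ℐ_{n,ξ}. -/
open Set Topology Filter

/-- A usual Cantor scheme, given by the endpoint functions of the intervals
`J_s = [a s, b s]`, indexed by finite binary sequences (lists of booleans),
where `s ++ [false]` is `s⌢0` and `s ++ [true]` is `s⌢1`. -/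
structure CantorScheme where
  a : List Bool → ℝ
  b : List Bool → ℝ
  left_min : ∀ s, a (s ++ [false]) = a s
  right_max : ∀ s, b (s ++ [true]) = b s
  lt1 : ∀ s, a (s ++ [false]) < b (s ++ [false])
  lt2 : ∀ s, b (s ++ [false]) < a (s ++ [true])
  lt3 : ∀ s, a (s ++ [true]) < b (s ++ [true])
  diam_tendsto : ∀ f : ℕ → Bool,
    Filter.Tendsto (fun n => b (List.ofFn fun i : Fin n => f i) - a (List.ofFn fun i : Fin n => f i))
      Filter.atTop (nhds 0)

/-- For `ξ ∈ (0,1]`, the unique `k` with `3^{-(k+1)} < ξ ≤ 3^{-k}`. -/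
noncomputable def scaleIndex (ξ : ℝ) : ℕ := ⌊-Real.logb 3 ξ⌋₊

/-- The piecewise linear map `left_s : [0,1] → J_s` with `left_s 0 = min J_s`,
`left_s (1/3^k) = max J_{s⌢0^{k+1}}`, linear on each `[1/3^{k+1}, 1/3^k]`. -/
noncomputable def CantorScheme.leftMap (C : CantorScheme) (s : List Bool) (ξ : ℝ) : ℝ :=
  if ξ ≤ 0 then C.a s
  else
    let k := scaleIndex ξ
    let x0 : ℝ := (3:ℝ)⁻¹ ^ (k + 1)
    let x1 : ℝ := (3:ℝ)⁻¹ ^ k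
    let y0 := C.b (s ++ List.replicate (k + 2) false)
    let y1 := C.b (s ++ List.replicate (k + 1) false)
    y0 + (ξ - x0) / (x1 - x0) * (y1 - y0)

/-- The piecewise linear map `right_s : [0,1] → J_s` with `right_s 0 = max J_s`,
`right_s (1/3^k) = min J_{s⌢1^{k+1}}`, linear on each `[1/3^{k+1}, 1/3^k]`. -/
noncomputable def CantorScheme.rightMap (C : CantorScheme) (s : List Bool) (ξ : ℝ) : ℝ :=
  if ξ ≤ 0 then C.b s
  else
    let k := scaleIndex ξ
    let x0 : ℝ := (3:ℝ)⁻¹ ^ (k + 1)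
    let x1 : ℝ := (3:ℝ)⁻¹ ^ k
    let y0 := C.a (s ++ List.replicate (k + 2) true)
    let y1 := C.a (s ++ List.replicate (k + 1) true)
    y0 + (ξ - x0) / (x1 - x0) * (y1 - y0)

/-- The set `∂ℐ_{n,ξ}` of endpoints of the intervals
`left_s([0,ξ]) = [min J_s, left_s ξ]` and `right_s([0,ξ]) = [right_s ξ, max J_s]`,
for `s` ranging over binary sequences of length `n`. -/
noncomputable def CantorScheme.boundary (C : CantorScheme) (n : ℕ) (ξ : ℝ) : Finset ℝ :=
  Finset.image
    (fun p : (Fin n → Bool) × Fin 4 =>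
      ![C.a (List.ofFn p.1), C.leftMap (List.ofFn p.1) ξ,
        C.rightMap (List.ofFn p.1) ξ, C.b (List.ofFn p.1)] p.2)
    Finset.univ

/-- Alternating product `j x₁^{±1} j x₂^{∓1} ⋯` along a list, starting with the sign
given by the boolean (`false` = inverse first). -/
def altProd {G : Type*} [Group G] (j : ℝ → G) : Bool → List ℝ → G
  | _, [] => 1
  | sgn, x :: l => (if sgn then j x else (j x)⁻¹) * altProd j (!sgn) l

/-- `π₋(X) = j x₁⁻¹ · j x₂ · j x₃⁻¹ ⋯` where `x₁ < x₂ < ⋯` enumerates the finite set `X`. -/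
noncomputable def piMinus {G : Type*} [Group G] (j : ℝ → G) (X : Finset ℝ) : G :=
  altProd j false (X.sort (· ≤ ·))

/-- The map `z_n : [0,1] → G`, `z_n 0 = e`, `z_n ξ = π₋(∂ℐ_{n,ξ})` for `ξ > 0`. -/
noncomputable def CantorScheme.z {G : Type*} [Group G] (C : CantorScheme) (j : ℝ → G)
    (n : ℕ) (ξ : ℝ) : G :=
  if ξ ≤ 0 then 1 else piMinus j (C.boundary n ξ)

/-- `j` is a functorial embedding of `[0,1]` into the topological group `G`:
a topological embedding of `[0,1]` such that every autohomeomorphism `h` of `[0,1]`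
extends to a continuous group homomorphism `H : G → G` with `H ∘ j = j ∘ h`. -/
def FunctorialEmbedding {G : Type*} [Group G] [TopologicalSpace G] (j : ℝ → G) : Prop :=
  Topology.IsEmbedding ((Set.Icc (0:ℝ) 1).restrict j) ∧
  ∀ h : Set.Icc (0:ℝ) 1 ≃ₜ Set.Icc (0:ℝ) 1,
    ∃ H : G →* G, Continuous H ∧ ∀ x : Set.Icc (0:ℝ) 1, H (j x) = j (h x)

/-! A finite set `X ⊆ [0,1]` containing `0` and `1` is determined by `π₋ X`. Indeed, if
`π₋ X = π₋ Y` and `y ∈ Y \ X`, a piecewise linear homeomorphism of `[0,1]` that fixes the other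
points of `X ∪ Y` and moves `y` to `y'` extends to an endomorphism `H` of `G`; applying `H` to
`π₋ X = π₋ Y` fixes the left side and replaces only the factor `j y` on the right, so
`j y = j y'`, contradicting injectivity of `j`. Hence `z_n ξ = z_m η` forces
`∂ℐ_{n,ξ} = ∂ℐ_{m,η}`, which is impossible: for `ξ ∈ (0,1]` the four endpoints attached to each `s`
are strictly increasing inside `J_s`, and the `J_s` with `|s| = n` are pairwise disjoint, so
`∂ℐ_{n,ξ}` has exactly `2^(n+2)` elements. -/

section AltProd

variable {G : Type*} [Group G] (j : ℝ → G)

theorem map_altProd (H : G →* G) (φ : ℝ → ℝ) :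
    ∀ (s : Bool) (L : List ℝ), (∀ x ∈ L, H (j x) = j (φ x)) →
      H (altProd j s L) = altProd j s (L.map φ)
  | _, [], _ => map_one H
  | s, x :: L, h => by
    simp only [altProd, List.map_cons, map_mul, apply_ite H, map_inv, h x List.mem_cons_self,
      map_altProd H φ (!s) L fun y hy => h y (List.mem_cons_of_mem x hy)]

theorem altProd_append_cons_inj :
    ∀ (s : Bool) (A : List ℝ) {x x' : ℝ} (B : List ℝ),
      altProd j s (A ++ x :: B) = altProd j s (A ++ x' :: B) → j x = j x'
  | s, [], _, _, _, h => by
    cases s <;> simpa [altProd] using h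
  | s, _ :: A, _, _, B, h => altProd_append_cons_inj (!s) A B (mul_left_cancel h)

theorem map_piMinus (H : G →* G) (φ : ℝ → ℝ) {X : Finset ℝ}
    (h : ∀ x ∈ X, H (j x) = j (φ x)) :
    H (piMinus j X) = altProd j false ((X.sort (· ≤ ·)).map φ) :=
  map_altProd j H φ false _ fun x hx => h x ((Finset.mem_sort _).1 hx)

theorem apply_eq_of_piMinus_eq {X Y : Finset ℝ} (heq : piMinus j X = piMinus j Y)
    (H : G →* G) (φ : ℝ → ℝ) (hH : ∀ x ∈ X ∪ Y, H (j x) = j (φ x))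
    (hX : ∀ x ∈ X, φ x = x) {y : ℝ} (hy : y ∈ Y) (hY : ∀ x ∈ Y, x ≠ y → φ x = x) :
    j y = j (φ y) := by
  obtain ⟨A, B, hAB⟩ := List.append_of_mem ((Finset.mem_sort (· ≤ ·)).2 hy)
  have hnodup := hAB ▸ Y.sort_nodup (· ≤ ·)
  have hmem : ∀ x ∈ A ++ B, x ∈ Y := fun x hx => (Finset.mem_sort (· ≤ ·)).1 <| by
    rw [hAB]; rcases List.mem_append.1 hx with hx | hx <;> simp [hx]
  have hfix : ∀ x ∈ A ++ B, φ x = x := fun x hx => hY x (hmem x hx) <| by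
    rintro rfl; exact (List.nodup_middle.1 hnodup |> List.nodup_cons.1).1 hx
  have hmapX : (X.sort (· ≤ ·)).map φ = X.sort (· ≤ ·) := by
    rw [List.map_congr_left (g := id) fun x hx => hX x ((Finset.mem_sort _).1 hx), List.map_id]
  have hmapY : (Y.sort (· ≤ ·)).map φ = A ++ φ y :: B := by
    rw [hAB, List.map_append, List.map_cons,
      List.map_congr_left (g := id) fun x hx => hfix x (List.mem_append_left B hx),
      List.map_congr_left (l := B) (g := id) fun x hx => hfix x (List.mem_append_right A hx),
      List.map_id, List.map_id]
  refine altProd_append_cons_inj j false A B ?_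
  calc altProd j false (A ++ y :: B) = piMinus j X := by rw [heq, piMinus, hAB]
    _ = H (piMinus j X) := by
      rw [map_piMinus j H φ fun x hx => hH x (Finset.mem_union_left Y hx), hmapX, piMinus]
    _ = altProd j false (A ++ φ y :: B) := by
      rw [heq, map_piMinus j H φ fun x hx => hH x (Finset.mem_union_right X hx), hmapY]

end AltProd

noncomputable def movePoint (p q y y' x : ℝ) : ℝ :=
  if x ≤ p then x
  else if x ≤ y then p + (x - p) * ((y' - p) / (y - p))
  else if x ≤ q then q + (x - q) * ((q - y') / (q - y))
  else x

section MovePoint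

variable {p q y y' : ℝ}

theorem movePoint_of_notMem_Ioo (hyq : y < q) {x : ℝ} (hx : x ∉ Ioo p q) :
    movePoint p q y y' x = x := by
  rw [mem_Ioo, not_and_or, not_lt, not_lt] at hx
  unfold movePoint
  rcases hx with hx | hx
  · rw [if_pos hx]
  · split_ifs with h₁ h₂ h₃
    · rfl
    · linarith
    · rw [le_antisymm h₃ hx]; ring
    · rfl

theorem movePoint_self (hpy : p < y) : movePoint p q y y' y = y' := by
  rw [movePoint, if_neg hpy.not_ge, if_pos le_rfl]
  field_simp [(sub_pos.2 hpy).ne']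
  ring

theorem movePoint_strictMono (hpy : p < y) (hyq : y < q) (hpy' : p < y') (hy'q : y' < q) :
    StrictMono (movePoint p q y y') := by
  have h₁ : 0 < (y' - p) / (y - p) := div_pos (by linarith) (by linarith)
  have h₂ : 0 < (q - y') / (q - y) := div_pos (by linarith) (by linarith)
  -- both linear pieces take the value `y'` at `y`
  have e₁ : (y - p) * ((y' - p) / (y - p)) = y' - p := mul_div_cancel₀ _ (by linarith)
  have e₂ : (q - y) * ((q - y') / (q - y)) = q - y' := mul_div_cancel₀ _ (by linarith)
  intro x₁ x₂ hx
  unfold movePoint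
  split_ifs <;> nlinarith [mul_pos (sub_pos.2 hx) h₁, mul_pos (sub_pos.2 hx) h₂]

theorem movePoint_movePoint (hpy : p < y) (hyq : y < q) (hpy' : p < y') (hy'q : y' < q)
    (x : ℝ) : movePoint p q y' y (movePoint p q y y' x) = x := by
  have : y - p ≠ 0 := by linarith
  have : y' - p ≠ 0 := by linarith
  have : q - y ≠ 0 := by linarith
  have : q - y' ≠ 0 := by linarith
  have e₁ : (y - p) * ((y' - p) / (y - p)) = y' - p := mul_div_cancel₀ _ (by linarith)
  have e₂ : (q - y) * ((q - y') / (q - y)) = q - y' := mul_div_cancel₀ _ (by linarith)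
  unfold movePoint
  split_ifs <;> first | rfl | (exfalso; nlinarith) | (field_simp; ring)

end MovePoint

theorem exists_orderIso_fix_finset_ne (F : Finset ℝ) {y : ℝ} (hy : y ∉ F) :
    ∃ e : ℝ ≃o ℝ, (∀ x ∈ F, e x = x) ∧ e y ≠ y := by
  obtain ⟨ε, hε, hball⟩ := Metric.isOpen_iff.1 F.finite_toSet.isClosed.isOpen_compl y hy
  have h₁ : y - ε < y := by linarith
  have h₂ : y < y + ε := by linarith
  have h₃ : y - ε < y + ε / 2 := by linarith
  have h₄ : y + ε / 2 < y + ε := by linarith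
  refine ⟨(movePoint_strictMono h₁ h₂ h₃ h₄).orderIsoOfSurjective _
    fun x => ⟨_, movePoint_movePoint h₃ h₄ h₁ h₂ x⟩, fun x hx => ?_, ?_⟩
  · refine movePoint_of_notMem_Ioo h₂ fun hx' => hball ?_ hx
    rw [Real.ball_eq_Ioo]; exact hx'
  · change movePoint _ _ y _ y ≠ y
    rw [movePoint_self h₁]
    linarith

namespace FunctorialEmbedding

variable {G : Type*} [Group G] [TopologicalSpace G] {j : ℝ → G}

theorem injOn (hj : FunctorialEmbedding j) : InjOn j (Icc 0 1) :=
  injOn_iff_injective.2 hj.1.injective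

theorem exists_monoidHom_of_orderIso (hj : FunctorialEmbedding j) (e : ℝ ≃o ℝ)
    (h₀ : e 0 = 0) (h₁ : e 1 = 1) : ∃ H : G →* G, ∀ x ∈ Icc (0 : ℝ) 1, H (j x) = j (e x) := by
  have hIcc : ∀ x, x ∈ Icc (0 : ℝ) 1 ↔ e x ∈ Icc (0 : ℝ) 1 := fun x => by
    rw [mem_Icc, mem_Icc, ← e.le_iff_le (x := 0), ← e.le_iff_le (y := 1), h₀, h₁]
  obtain ⟨H, -, hH⟩ := hj.2 (e.toHomeomorph.subtype hIcc)
  exact ⟨H, fun x hx => hH ⟨x, hx⟩⟩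

theorem piMinus_ne_of_mem_of_notMem (hj : FunctorialEmbedding j) {X Y : Finset ℝ}
    (hX : ↑X ⊆ Icc (0 : ℝ) 1) (hY : ↑Y ⊆ Icc (0 : ℝ) 1) (h₀ : (0 : ℝ) ∈ X) (h₁ : (1 : ℝ) ∈ X)
    {y : ℝ} (hyY : y ∈ Y) (hyX : y ∉ X) : piMinus j X ≠ piMinus j Y := by
  intro heq
  obtain ⟨e, he, hey⟩ :=
    exists_orderIso_fix_finset_ne ((X ∪ Y).erase y) (Finset.notMem_erase y _)
  have hfix : ∀ x ∈ X ∪ Y, x ≠ y → e x = x := fun x hx hxy =>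
    he x (Finset.mem_erase.2 ⟨hxy, hx⟩)
  have hfixX : ∀ x ∈ X, e x = x := fun x hx =>
    hfix x (Finset.mem_union_left Y hx) (ne_of_mem_of_not_mem hx hyX)
  obtain ⟨H, hH⟩ := hj.exists_monoidHom_of_orderIso e (hfixX 0 h₀) (hfixX 1 h₁)
  have hjy := apply_eq_of_piMinus_eq j heq H e
    (fun x hx => hH x (union_subset hX hY (Finset.coe_union X Y ▸ hx))) hfixX hyY
    fun x hx => hfix x (Finset.mem_union_right X hx)
  have hy : y ∈ Icc (0 : ℝ) 1 := hY hyY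
  have hey' : e y ∈ Icc (0 : ℝ) 1 := by
    rw [mem_Icc, ← hfixX 0 h₀, ← hfixX 1 h₁, e.le_iff_le, e.le_iff_le]; exact hy
  exact hey (hj.injOn hy hey' hjy).symm

theorem piMinus_injOn (hj : FunctorialEmbedding j) :
    InjOn (piMinus j) {X : Finset ℝ | ↑X ⊆ Icc (0 : ℝ) 1 ∧ (0 : ℝ) ∈ X ∧ (1 : ℝ) ∈ X} := by
  rintro X ⟨hX, hX₀, hX₁⟩ Y ⟨hY, hY₀, hY₁⟩ heq
  refine Finset.Subset.antisymm (fun x hx => ?_) fun x hx => ?_ <;> by_contra hx'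
  · exact hj.piMinus_ne_of_mem_of_notMem hY hX hY₀ hY₁ hx hx' heq.symm
  · exact hj.piMinus_ne_of_mem_of_notMem hX hY hX₀ hX₁ hx hx' heq

end FunctorialEmbedding

theorem scaleIndex_spec {ξ : ℝ} (h₀ : 0 < ξ) (h₁ : ξ ≤ 1) :
    (3 : ℝ)⁻¹ ^ (scaleIndex ξ + 1) ≤ ξ ∧ ξ ≤ (3 : ℝ)⁻¹ ^ scaleIndex ξ := by
  have hlog : 0 ≤ -Real.logb 3 ξ := neg_nonneg.2 (Real.logb_nonpos (by norm_num) h₀.le h₁)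
  have hpow : ∀ k : ℕ, (3 : ℝ)⁻¹ ^ k = (3 : ℝ) ^ (-(k : ℝ)) := fun k => by
    rw [Real.rpow_neg (by norm_num), Real.rpow_natCast, inv_pow]
  rw [hpow, hpow, ← Real.le_logb_iff_rpow_le (by norm_num) h₀,
    ← Real.logb_le_iff_le_rpow (by norm_num) h₀, scaleIndex]
  constructor
  · push_cast
    linarith [Nat.lt_floor_add_one (-Real.logb 3 ξ)]
  · linarith [Nat.floor_le hlog]

theorem add_div_mul_sub_mem_uIcc {x₀ x₁ y₀ y₁ ξ : ℝ} (hx : x₀ < x₁) (hξ : ξ ∈ Icc x₀ x₁) :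
    y₀ + (ξ - x₀) / (x₁ - x₀) * (y₁ - y₀) ∈ uIcc y₀ y₁ := by
  have hμ₀ : 0 ≤ (ξ - x₀) / (x₁ - x₀) := div_nonneg (by linarith [hξ.1]) (by linarith)
  have hμ₁ : (ξ - x₀) / (x₁ - x₀) ≤ 1 := (div_le_one (by linarith)).2 (by linarith [hξ.2])
  rcases le_total y₀ y₁ with hy | hy
  · rw [uIcc_of_le hy]; constructor <;> nlinarith
  · rw [uIcc_of_ge hy]; constructor <;> nlinarith

theorem List.exists_append_cons_of_ne : ∀ {s t : List Bool}, s.length = t.length → s ≠ t →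
    ∃ u v w, (s = u ++ false :: v ∧ t = u ++ true :: w) ∨
      (s = u ++ true :: v ∧ t = u ++ false :: w)
  | [], [], _, hne => absurd rfl hne
  | x :: s, y :: t, hlen, hne => by
    by_cases hxy : x = y
    · subst hxy
      obtain ⟨u, v, w, h⟩ := exists_append_cons_of_ne (Nat.succ.inj hlen)
        fun hst => hne (hst ▸ rfl)
      exact ⟨x :: u, v, w, by rcases h with ⟨rfl, rfl⟩ | ⟨rfl, rfl⟩ <;> simp⟩
    · refine ⟨[], s, t, ?_⟩
      cases x <;> cases y <;> simp_all

namespace CantorScheme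

variable (C : CantorScheme)

theorem a_lt_b (s : List Bool) : C.a s < C.b s := by
  linarith [C.left_min s, C.right_max s, C.lt1 s, C.lt2 s, C.lt3 s]

theorem a_le_a_append (s t : List Bool) : C.a s ≤ C.a (s ++ t) := by
  induction t using List.reverseRecOn with
  | nil => simp
  | append_singleton t x ih =>
    rw [← List.append_assoc]
    cases x
    · rwa [C.left_min]
    · linarith [C.lt1 (s ++ t), C.lt2 (s ++ t), C.left_min (s ++ t)]

theorem b_append_le_b (s t : List Bool) : C.b (s ++ t) ≤ C.b s := by
  induction t using List.reverseRecOn with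
  | nil => simp
  | append_singleton t x ih =>
    rw [← List.append_assoc]
    cases x
    · linarith [C.lt2 (s ++ t), C.lt3 (s ++ t), C.right_max (s ++ t)]
    · rwa [C.right_max]

theorem a_append_replicate_false (s : List Bool) (k : ℕ) :
    C.a (s ++ List.replicate k false) = C.a s := by
  induction k with
  | zero => simp
  | succ k ih => rw [List.replicate_succ', ← List.append_assoc, C.left_min, ih]

theorem b_append_replicate_true (s : List Bool) (k : ℕ) :
    C.b (s ++ List.replicate k true) = C.b s := by
  induction k with
  | zero => simp
  | succ k ih => rw [List.replicate_succ', ← List.append_assoc, C.right_max, ih]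

theorem b_append_false_lt_a_append_true (u v w : List Bool) :
    C.b (u ++ false :: v) < C.a (u ++ true :: w) :=
  calc C.b (u ++ false :: v) ≤ C.b (u ++ [false]) := by
        simpa using C.b_append_le_b (u ++ [false]) v
    _ < C.a (u ++ [true]) := C.lt2 u
    _ ≤ C.a (u ++ true :: w) := by simpa using C.a_le_a_append (u ++ [true]) w

theorem b_lt_a_or_b_lt_a_of_ne {s t : List Bool} (hlen : s.length = t.length) (hne : s ≠ t) :
    C.b s < C.a t ∨ C.b t < C.a s := by
  obtain ⟨u, v, w, ⟨rfl, rfl⟩ | ⟨rfl, rfl⟩⟩ := List.exists_append_cons_of_ne hlen hne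
  · exact Or.inl (C.b_append_false_lt_a_append_true u v w)
  · exact Or.inr (C.b_append_false_lt_a_append_true u w v)

noncomputable def endpoints (s : List Bool) (ξ : ℝ) : Fin 4 → ℝ :=
  ![C.a s, C.leftMap s ξ, C.rightMap s ξ, C.b s]

theorem boundary_eq_image (n : ℕ) (ξ : ℝ) : C.boundary n ξ =
    Finset.univ.image fun p : (Fin n → Bool) × Fin 4 => C.endpoints (List.ofFn p.1) ξ p.2 :=
  rfl

section Endpoints

variable {ξ : ℝ} (s : List Bool)

theorem leftMap_mem_Icc (h₀ : 0 < ξ) (h₁ : ξ ≤ 1) : C.leftMap s ξ ∈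
    Icc (C.b (s ++ List.replicate (scaleIndex ξ + 2) false))
      (C.b (s ++ List.replicate (scaleIndex ξ + 1) false)) := by
  rw [← uIcc_of_le, leftMap, if_neg h₀.not_ge]
  · exact add_div_mul_sub_mem_uIcc (pow_lt_pow_right_of_lt_one₀ (by norm_num) (by norm_num)
      (lt_add_one _)) (scaleIndex_spec h₀ h₁)
  · rw [List.replicate_succ' (n := scaleIndex ξ + 1), ← List.append_assoc]
    exact C.b_append_le_b _ _

theorem rightMap_mem_Icc (h₀ : 0 < ξ) (h₁ : ξ ≤ 1) : C.rightMap s ξ ∈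
    Icc (C.a (s ++ List.replicate (scaleIndex ξ + 1) true))
      (C.a (s ++ List.replicate (scaleIndex ξ + 2) true)) := by
  rw [← uIcc_of_ge, rightMap, if_neg h₀.not_ge]
  · exact add_div_mul_sub_mem_uIcc (pow_lt_pow_right_of_lt_one₀ (by norm_num) (by norm_num)
      (lt_add_one _)) (scaleIndex_spec h₀ h₁)
  · rw [List.replicate_succ' (n := scaleIndex ξ + 1), ← List.append_assoc]
    exact C.a_le_a_append _ _

theorem a_lt_leftMap (h₀ : 0 < ξ) (h₁ : ξ ≤ 1) : C.a s < C.leftMap s ξ :=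
  calc C.a s = C.a (s ++ List.replicate (scaleIndex ξ + 2) false) :=
        (C.a_append_replicate_false s _).symm
    _ < C.b (s ++ List.replicate (scaleIndex ξ + 2) false) := C.a_lt_b _
    _ ≤ C.leftMap s ξ := (C.leftMap_mem_Icc s h₀ h₁).1

theorem rightMap_lt_b (h₀ : 0 < ξ) (h₁ : ξ ≤ 1) : C.rightMap s ξ < C.b s :=
  calc C.rightMap s ξ ≤ C.a (s ++ List.replicate (scaleIndex ξ + 2) true) :=
        (C.rightMap_mem_Icc s h₀ h₁).2
    _ < C.b (s ++ List.replicate (scaleIndex ξ + 2) true) := C.a_lt_b _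
    _ = C.b s := C.b_append_replicate_true s _

theorem leftMap_lt_rightMap (h₀ : 0 < ξ) (h₁ : ξ ≤ 1) : C.leftMap s ξ < C.rightMap s ξ :=
  calc C.leftMap s ξ ≤ C.b (s ++ List.replicate (scaleIndex ξ + 1) false) :=
        (C.leftMap_mem_Icc s h₀ h₁).2
    _ < C.a (s ++ List.replicate (scaleIndex ξ + 1) true) := by
      simpa only [List.replicate_succ] using C.b_append_false_lt_a_append_true s _ _
    _ ≤ C.rightMap s ξ := (C.rightMap_mem_Icc s h₀ h₁).1

theorem endpoints_strictMono (h₀ : 0 < ξ) (h₁ : ξ ≤ 1) : StrictMono (C.endpoints s ξ) := by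
  refine Fin.strictMono_iff_lt_succ.2 fun i => ?_
  fin_cases i
  · exact C.a_lt_leftMap s h₀ h₁
  · exact C.leftMap_lt_rightMap s h₀ h₁
  · exact C.rightMap_lt_b s h₀ h₁

theorem endpoints_mem_Icc (h₀ : 0 < ξ) (h₁ : ξ ≤ 1) (i : Fin 4) :
    C.endpoints s ξ i ∈ Icc (C.a s) (C.b s) :=
  ⟨(C.endpoints_strictMono s h₀ h₁).monotone (Fin.zero_le i),
    (C.endpoints_strictMono s h₀ h₁).monotone (Fin.le_last i)⟩

end Endpoints

theorem endpoints_injective {ξ : ℝ} (h₀ : 0 < ξ) (h₁ : ξ ≤ 1) (n : ℕ) :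
    Function.Injective fun p : (Fin n → Bool) × Fin 4 => C.endpoints (List.ofFn p.1) ξ p.2 := by
  rintro ⟨s, i⟩ ⟨t, i'⟩ (h : C.endpoints _ ξ i = C.endpoints _ ξ i')
  by_cases hst : s = t
  · subst hst
    rw [(C.endpoints_strictMono _ h₀ h₁).injective h]
  · have hs := C.endpoints_mem_Icc (List.ofFn s) h₀ h₁ i
    have ht := C.endpoints_mem_Icc (List.ofFn t) h₀ h₁ i'
    rcases C.b_lt_a_or_b_lt_a_of_ne (by simp) (List.ofFn_injective.ne hst) with hlt | hlt
    · linarith [hs.2, ht.1]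
    · linarith [hs.1, ht.2]

theorem card_boundary {ξ : ℝ} (h₀ : 0 < ξ) (h₁ : ξ ≤ 1) (n : ℕ) :
    (C.boundary n ξ).card = 2 ^ (n + 2) := by
  rw [boundary_eq_image, Finset.card_image_of_injective _ (C.endpoints_injective h₀ h₁ n)]
  simp [pow_add]

theorem boundary_subset_Icc {ξ : ℝ} (h₀ : 0 < ξ) (h₁ : ξ ≤ 1) (n : ℕ) :
    ↑(C.boundary n ξ) ⊆ Icc (C.a []) (C.b []) := by
  intro x hx
  obtain ⟨⟨s, i⟩, -, rfl⟩ := Finset.mem_image.1 (C.boundary_eq_image n ξ ▸ hx)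
  exact Icc_subset_Icc (C.a_le_a_append [] _) (C.b_append_le_b [] _)
    (C.endpoints_mem_Icc (List.ofFn s) h₀ h₁ i)

theorem a_nil_mem_boundary (n : ℕ) (ξ : ℝ) : C.a [] ∈ C.boundary n ξ :=
  Finset.mem_image.2 ⟨(fun _ => false, 0), Finset.mem_univ _, by
    simpa [List.ofFn_const] using C.a_append_replicate_false [] n⟩

theorem b_nil_mem_boundary (n : ℕ) (ξ : ℝ) : C.b [] ∈ C.boundary n ξ :=
  Finset.mem_image.2 ⟨(fun _ => true, 3), Finset.mem_univ _, by
    simpa [List.ofFn_const] using C.b_append_replicate_true [] n⟩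

theorem z_of_pos {G : Type*} [Group G] (j : ℝ → G) (n : ℕ) {ξ : ℝ} (h₀ : 0 < ξ) :
    C.z j n ξ = piMinus j (C.boundary n ξ) :=
  if_neg h₀.not_ge

end CantorScheme

theorem stmt5_general {G : Type*} [Group G] [TopologicalSpace G]
    (j : ℝ → G) (hj : FunctorialEmbedding j)
    (C : CantorScheme) (h0 : C.a [] = 0) (h1 : C.b [] = 1)
    {n m : ℕ} (hnm : n ≠ m) :
    Disjoint (C.z j n '' Set.Ioc (0:ℝ) 1) (C.z j m '' Set.Ioc (0:ℝ) 1) := by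
  have hmem : ∀ k, ∀ ξ ∈ Ioc (0 : ℝ) 1,
      C.boundary k ξ ∈ {X : Finset ℝ | ↑X ⊆ Icc (0 : ℝ) 1 ∧ (0 : ℝ) ∈ X ∧ (1 : ℝ) ∈ X} :=
    fun k ξ hξ => h0 ▸ h1 ▸ ⟨C.boundary_subset_Icc hξ.1 hξ.2 k, C.a_nil_mem_boundary k ξ,
      C.b_nil_mem_boundary k ξ⟩
  rw [Set.disjoint_left]
  rintro _ ⟨ξ, hξ, rfl⟩ ⟨η, hη, hz⟩
  rw [C.z_of_pos j n hξ.1, C.z_of_pos j m hη.1] at hz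
  have hcard := congrArg Finset.card (hj.piMinus_injOn (hmem m η hη) (hmem n ξ hξ) hz)
  rw [C.card_boundary hη.1 hη.2, C.card_boundary hξ.1 hξ.2] at hcard
  exact hnm (by have := Nat.pow_right_injective le_rfl hcard; omega)

/-- If `j : [0,1] → G` is a functorial embedding and `ℐ` a usual Cantor scheme with
`J_∅ = [0,1]`, then `z_n((0,1])` and `z_m((0,1])` are disjoint for `n ≠ m`. -/
theorem stmt5 {G : Type*} [Group G] [TopologicalSpace G] [IsTopologicalGroup G]
    (j : ℝ → G) (hj : FunctorialEmbedding j)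
    (C : CantorScheme) (h0 : C.a [] = 0) (h1 : C.b [] = 1)
    {n m : ℕ} (hnm : n ≠ m) :
    Disjoint (C.z j n '' Set.Ioc (0:ℝ) 1) (C.z j m '' Set.Ioc (0:ℝ) 1) :=
  stmt5_general j hj C h0 h1 hnm
end

section
/- Let G be a topological group with countable pseudocharacter (the identity is a Gδ point) that contains a topological copy of the Fréchet–Urysohn fan S_ω. Then G contains a closed topological copy of S_ω. -/
open Set Topology Filter

/-- The convergent sequence `S₀ = {0} ∪ {1/(n+1) : n ∈ ℕ} ⊆ ℝ`. -/
def S0 : Set ℝ := {0} ∪ {x | ∃ n : ℕ, x = 1 / (n + 1)}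

/-- The equivalence relation on `S₀ × ℕ` collapsing `{0} × ℕ` to a point. -/
def fanSetoid : Setoid (S0 × ℕ) where
  r p q := p = q ∨ (p.1.1 = 0 ∧ q.1.1 = 0)
  iseqv := by
    refine ⟨fun p => Or.inl rfl, ?_, ?_⟩
    · rintro p q (rfl | ⟨hp, hq⟩)
      · exact Or.inl rfl
      · exact Or.inr ⟨hq, hp⟩
    · rintro p q r (rfl | ⟨hp, hq⟩) (rfl | ⟨hq', hr⟩)
      · exact Or.inl rfl
      · exact Or.inr ⟨hq', hr⟩
      · exact Or.inr ⟨hp, hq⟩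
      · exact Or.inr ⟨hp, hr⟩

/-- The Fréchet–Urysohn fan `S_ω = (S₀ × ℕ) / ({0} × ℕ)` with the quotient topology. -/
def FrechetUrysohnFan : Type := Quotient fanSetoid

instance : TopologicalSpace FrechetUrysohnFan :=
  inferInstanceAs (TopologicalSpace (Quotient fanSetoid))

/-! Topological groups are regular, so countable pseudocharacter at the identity (hence, by
homogeneity, at every point) yields a decreasing sequence of closed neighbourhoods `W n` of the
vertex `x₀` of the given copy of `S_ω` with `⋂ n, W n = {x₀}`. Discarding from the `n`-th
sequence of the fan the finitely many points outside `W n` leaves a subfan, which is again a copy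
of `S_ω`. It is closed: a point `y ≠ x₀` lies outside some closed `W N`, and off `W N` the subfan
meets only the first `N` sequences, each of which together with its limit `x₀` is compact. -/

def HasCountablePseudocharacterAt {X : Type*} [TopologicalSpace X] (x : X) : Prop :=
  ∃ u : ℕ → Set X, (∀ n, IsOpen (u n)) ∧ ⋂ n, u n = {x}

namespace HasCountablePseudocharacterAt

variable {X : Type*} [TopologicalSpace X]

theorem mul_left {G : Type*} [Group G] [TopologicalSpace G] [ContinuousMul G] {x : G}
    (h : HasCountablePseudocharacterAt x) (g : G) : HasCountablePseudocharacterAt (g * x) := by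
  obtain ⟨u, hu_open, hu_inter⟩ := h
  refine ⟨fun n => (g⁻¹ * ·) ⁻¹' u n, fun n => (hu_open n).preimage (continuous_const_mul _), ?_⟩
  rw [← preimage_iInter, hu_inter, preimage_mul_left_singleton, inv_inv]

theorem exists_antitone_closed_nhds [RegularSpace X] {x : X}
    (h : HasCountablePseudocharacterAt x) :
    ∃ W : ℕ → Set X, Antitone W ∧ (∀ n, IsClosed (W n)) ∧ (∀ n, W n ∈ 𝓝 x) ∧
      ⋂ n, W n = {x} := by
  obtain ⟨u, hu_open, hu_inter⟩ := h
  have hx (n : ℕ) : x ∈ u n := mem_iInter.1 (hu_inter ▸ mem_singleton x) n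
  choose C hC_nhds hC_closed hC_sub using
    fun n => exists_mem_nhds_isClosed_subset ((hu_open n).mem_nhds (hx n))
  refine ⟨fun n => ⋂ k ≤ n, C k,
    fun a b hab => biInter_mono (fun k hk => le_trans hk hab) fun _ _ => subset_rfl,
    fun n => isClosed_biInter fun k _ => hC_closed k,
    fun n => (biInter_mem (finite_le_nat n)).2 fun k _ => hC_nhds k, ?_⟩
  refine subset_antisymm ?_ ?_
  · rw [← hu_inter]
    exact iInter_mono fun n y hy => hC_sub n (mem_iInter₂.1 hy n le_rfl)
  · simpa using fun n k _ => mem_of_mem_nhds (hC_nhds k)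

end HasCountablePseudocharacterAt

theorem isClosed_insert_iUnion_range_of_antitone {X : Type*} [TopologicalSpace X] [T2Space X]
    {x : X} {W : ℕ → Set X} (hW : Antitone W) (hW_closed : ∀ n, IsClosed (W n))
    (hW_inter : ⋂ n, W n = {x}) {s : ℕ → ℕ → X} (hs : ∀ n, Tendsto (s n) atTop (𝓝 x))
    (hsW : ∀ n m, s n m ∈ W n) : IsClosed (insert x (⋃ n, range (s n))) := by
  refine isClosed_of_closure_subset fun y hy => ?_
  by_cases hyx : y = x
  · subst hyx; exact mem_insert _ _
  obtain ⟨N, hN⟩ : ∃ N, y ∉ W N := by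
    have : y ∉ ⋂ n, W n := by rwa [hW_inter, mem_singleton_iff]
    simpa only [mem_iInter, not_forall] using this
  have hx : x ∈ W N := mem_iInter.1 (hW_inter ▸ mem_singleton x) N
  set F := W N ∪ ⋃ n < N, insert x (range (s n))
  have hF_closed : IsClosed F :=
    (hW_closed N).union <| (finite_lt_nat N).isClosed_biUnion fun n _ =>
      (hs n).isCompact_insert_range.isClosed
  have hsub : insert x (⋃ n, range (s n)) ⊆ F := by
    rintro _ (rfl | ⟨_, ⟨n, rfl⟩, m, rfl⟩)
    · exact Or.inl hx
    · rcases lt_or_ge n N with hn | hn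
      · exact Or.inr (mem_biUnion hn (mem_insert_of_mem _ ⟨m, rfl⟩))
      · exact Or.inl (hW hn (hsW n m))
  rcases closure_minimal hsub hF_closed hy with hy | hy
  · exact absurd hy hN
  · obtain ⟨n, -, rfl | ⟨m, rfl⟩⟩ := mem_iUnion₂.1 hy
    · exact mem_insert _ _
    · exact mem_insert_of_mem _ (mem_iUnion.2 ⟨n, m, rfl⟩)

namespace S0

def zero : S0 := ⟨0, Or.inl rfl⟩

noncomputable def term (m : ℕ) : S0 := ⟨1 / (m + 1), Or.inr ⟨m, rfl⟩⟩

/-- `index zero = 0` is a junk value. -/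
noncomputable def index (x : S0) : ℕ := ⌊(x : ℝ)⁻¹⌋₊ - 1

theorem coe_term (m : ℕ) : (term m : ℝ) = 1 / (m + 1) := rfl

theorem term_pos (m : ℕ) : 0 < (term m : ℝ) := Nat.one_div_pos_of_nat

theorem term_ne_zero (m : ℕ) : term m ≠ zero := fun h => (term_pos m).ne' (congrArg Subtype.val h)

theorem term_inj {k m : ℕ} : term k = term m ↔ k = m := by
  simp [term, Subtype.ext_iff]

theorem index_term (m : ℕ) : index (term m) = m := by
  simp [index, term, Nat.floor_add_one]

theorem cases (x : S0) : x = zero ∨ ∃ m, x = term m := by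
  obtain ⟨v, rfl | ⟨m, rfl⟩⟩ := x
  · exact Or.inl rfl
  · exact Or.inr ⟨m, rfl⟩

theorem tendsto_term : Tendsto term atTop (𝓝 zero) :=
  tendsto_subtype_rng.2 tendsto_one_div_add_atTop_nhds_zero_nat

theorem isOpen_singleton_term (m : ℕ) : IsOpen ({term m} : Set S0) := by
  have : ({term m} : Set S0) =
      Subtype.val ⁻¹' Ioo (1 / ((m : ℝ) + 2)) (1 / ((m : ℝ) + 2⁻¹)) := by
    ext x
    rcases cases x with rfl | ⟨k, rfl⟩
    · rw [mem_singleton_iff, eq_comm, mem_preimage, mem_Ioo]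
      exact iff_of_false (term_ne_zero m) fun h => lt_asymm h.1 (by positivity : (0 : ℝ) < _)
    · rw [mem_singleton_iff, term_inj, mem_preimage, mem_Ioo, coe_term,
        one_div_lt_one_div (by positivity) (by positivity),
        one_div_lt_one_div (by positivity) (by positivity)]
      constructor
      · rintro rfl
        constructor <;> linarith
      · rintro ⟨h₁, h₂⟩
        have : k < m + 1 := by exact_mod_cast (by linarith : (k : ℝ) < m + 1)
        have : m < k + 1 := by exact_mod_cast (by linarith : (m : ℝ) < k + 1)
        omega
  rw [this]
  exact isOpen_Ioo.preimage continuous_subtype_val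

theorem nhds_term (m : ℕ) : 𝓝 (term m) = pure (term m) :=
  (isOpen_singleton_iff_nhds_eq_pure _).1 (isOpen_singleton_term m)

theorem nhds_zero : 𝓝 zero = map term atTop ⊔ pure zero := by
  refine le_antisymm (fun s hs => ?_) (sup_le tendsto_term (pure_le_nhds zero))
  obtain ⟨⟨K, hK⟩, hz⟩ : (∃ K, ∀ m ≥ K, term m ∈ s) ∧ zero ∈ s := by
    simpa only [mem_sup, mem_map, mem_atTop_sets, mem_pure, mem_preimage] using hs
  refine mem_of_superset ((isOpen_Iio.preimage continuous_subtype_val).mem_nhds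
    (show (zero : ℝ) < 1 / ((K : ℝ) + 1) from Nat.one_div_pos_of_nat)) fun x hx => ?_
  rcases cases x with rfl | ⟨m, rfl⟩
  · exact hz
  · refine hK m ?_
    have : (K : ℝ) < m := by
      rw [mem_preimage, mem_Iio, coe_term, one_div_lt_one_div (by positivity) (by positivity)] at hx
      linarith
    exact_mod_cast this.le

theorem continuous_iff {Y : Type*} [TopologicalSpace Y] {g : S0 → Y} :
    Continuous g ↔ Tendsto (g ∘ term) atTop (𝓝 (g zero)) := by
  refine ⟨fun hg => (hg.tendsto zero).comp tendsto_term, fun hg => ?_⟩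
  refine continuous_iff_continuousAt.2 fun x => ?_
  rcases cases x with rfl | ⟨m, rfl⟩
  · rw [ContinuousAt, nhds_zero, tendsto_sup, tendsto_map'_iff]
    exact ⟨hg, tendsto_pure_nhds g zero⟩
  · rw [ContinuousAt, nhds_term]
    exact tendsto_pure_nhds g _

end S0

namespace FrechetUrysohnFan

def mk (x : S0) (n : ℕ) : FrechetUrysohnFan := Quotient.mk fanSetoid (x, n)

def vertex : FrechetUrysohnFan := mk S0.zero 0

noncomputable def point (n m : ℕ) : FrechetUrysohnFan := mk (S0.term m) n

theorem mk_zero (n : ℕ) : mk S0.zero n = vertex :=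
  Quotient.sound (Or.inr ⟨rfl, rfl⟩)

theorem cases (x : FrechetUrysohnFan) : x = vertex ∨ ∃ n m, x = point n m := by
  obtain ⟨x, n⟩ := x
  rcases S0.cases x with rfl | ⟨m, rfl⟩
  · exact Or.inl (mk_zero n)
  · exact Or.inr ⟨n, m, rfl⟩

theorem range_eq {X : Type*} (g : FrechetUrysohnFan → X) :
    range g = insert (g vertex) (⋃ n, range fun m => g (point n m)) := by
  refine subset_antisymm ?_ ?_
  · rintro _ ⟨x, rfl⟩
    rcases cases x with rfl | ⟨n, m, rfl⟩
    · exact mem_insert _ _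
    · exact mem_insert_of_mem _ (mem_iUnion.2 ⟨n, m, rfl⟩)
  · rintro _ (rfl | ⟨_, ⟨n, rfl⟩, m, rfl⟩)
    · exact mem_range_self _
    · exact mem_range_self _

theorem continuous_mk (n : ℕ) : Continuous (mk · n) :=
  continuous_quotient_mk'.comp (continuous_id.prodMk continuous_const)

theorem tendsto_point (n : ℕ) : Tendsto (point n) atTop (𝓝 vertex) := by
  rw [← mk_zero n]
  exact ((continuous_mk n).tendsto S0.zero).comp S0.tendsto_term

noncomputable def reindex (σ : ℕ → ℕ → ℕ) : FrechetUrysohnFan → FrechetUrysohnFan :=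
  Quotient.lift
    (fun p : S0 × ℕ => if (p.1 : ℝ) = 0 then vertex else point p.2 (σ p.2 (S0.index p.1)))
    (by rintro p q (rfl | ⟨hp, hq⟩) <;> simp_all)

theorem reindex_vertex (σ : ℕ → ℕ → ℕ) : reindex σ vertex = vertex :=
  if_pos rfl

theorem reindex_point (σ : ℕ → ℕ → ℕ) (n m : ℕ) : reindex σ (point n m) = point n (σ n m) := by
  show ite _ _ _ = _
  rw [if_neg (S0.term_pos m).ne', S0.index_term]

theorem continuous_reindex {σ : ℕ → ℕ → ℕ} (hσ : ∀ n, Tendsto (σ n) atTop atTop) :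
    Continuous (reindex σ) := by
  refine Continuous.quotient_lift (continuous_prod_of_discrete_right.2 fun n => ?_) _
  have h : Tendsto (fun m => reindex σ (point n m)) atTop (𝓝 (reindex σ (mk S0.zero n))) := by
    simpa only [reindex_point, mk_zero, reindex_vertex, Function.comp_def] using
      (tendsto_point n).comp (hσ n)
  exact S0.continuous_iff.2 h

theorem isEmbedding_reindex_add (M : ℕ → ℕ) : IsEmbedding (reindex fun n m => m + M n) := by
  refine Function.LeftInverse.isEmbedding (f := reindex fun n m => m - M n) (fun x => ?_)
    (continuous_reindex fun n => tendsto_sub_atTop_nat _)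
    (continuous_reindex fun n => tendsto_add_atTop_nat _)
  rcases cases x with rfl | ⟨n, m, rfl⟩
  · simp only [reindex_vertex]
  · simp only [reindex_point, Nat.add_sub_cancel]

end FrechetUrysohnFan

/-- A topological group of countable pseudocharacter which contains a topological copy of
the Fréchet–Urysohn fan `S_ω` contains a closed topological copy of `S_ω`. -/
theorem stmt17 {G : Type*} [Group G] [TopologicalSpace G] [IsTopologicalGroup G]
    (hpsi : ∃ u : ℕ → Set G, (∀ n, IsOpen (u n)) ∧ (⋂ n, u n) = {(1 : G)})
    (hfan : ∃ f : FrechetUrysohnFan → G, Topology.IsEmbedding f) :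
    ∃ f : FrechetUrysohnFan → G, Topology.IsEmbedding f ∧ IsClosed (Set.range f) := by
  obtain ⟨f, hf⟩ := hfan
  have hpsi : HasCountablePseudocharacterAt (1 : G) := hpsi
  have : T2Space G := by
    obtain ⟨W, -, hW_closed, -, hW_inter⟩ := hpsi.exists_antitone_closed_nhds
    exact IsTopologicalGroup.t2Space_iff_one_closed.2 (hW_inter ▸ isClosed_iInter hW_closed)
  set x₀ := f FrechetUrysohnFan.vertex
  obtain ⟨W, hW_anti, hW_closed, hW_nhds, hW_inter⟩ :=
    (by simpa using hpsi.mul_left x₀ : HasCountablePseudocharacterAt x₀).exists_antitone_closed_nhds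
  have hf_point (n : ℕ) : Tendsto (fun m => f (FrechetUrysohnFan.point n m)) atTop (𝓝 x₀) :=
    (hf.continuous.tendsto _).comp (FrechetUrysohnFan.tendsto_point n)
  choose M hM using fun n => eventually_atTop.1 ((hf_point n).eventually_mem (hW_nhds n))
  refine ⟨f ∘ FrechetUrysohnFan.reindex (fun n m => m + M n),
    hf.comp (FrechetUrysohnFan.isEmbedding_reindex_add M), ?_⟩
  simp only [FrechetUrysohnFan.range_eq, Function.comp_apply, FrechetUrysohnFan.reindex_vertex,
    FrechetUrysohnFan.reindex_point]
  exact isClosed_insert_iUnion_range_of_antitone hW_anti hW_closed hW_inter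
    (fun n => (hf_point n).comp (tendsto_add_atTop_nat (M n)))
    fun n m => hM n _ (Nat.le_add_left _ _)
end
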